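/- (Logarithmic-size counters for every count.) For every integer T ≥ 1 there exists a switch graph (V, s₀, s₁) with at most ⌊log₂ T⌋ + 3 vertices, containing three distinct vertices C, A, B with s₀(A) = s₁(A) = C and s₀(B) = s₁(B) = B, such that the train run from C visits A exactly T times before first reaching B. -/

import Mathlib

open scoped Classical

variable {V : Type*}

/-- One step of the train: move along the edge given by the current switch state
and toggle the switch at the current vertex. -/
def step [DecidableEq V] (s0 s1 : V → V) (c : V × (V → Bool)) : V × (V → Bool) :=
  (if c.2 c.1 then s1 c.1 else s0 c.1, Function.update c.2 c.1 (!c.2 c.1))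

/-- The train run from `u`: iterate the step map starting with all switches `0`. -/
def run [DecidableEq V] (s0 s1 : V → V) (u : V) (k : ℕ) : V × (V → Bool) :=
  (step s0 s1)^[k] (u, fun _ => false)

/-- The train run from `u` visits `A` exactly `T` times before first reaching `B`. -/
def VisitsExactly [DecidableEq V] (s0 s1 : V → V) (u A B : V) (T : ℕ) : Prop :=
  ∃ N, (run s0 s1 u N).1 = B ∧ (∀ k < N, (run s0 s1 u k).1 ≠ B) ∧
    ((Finset.range N).filter (fun k => (run s0 s1 u k).1 = A)).card = T

namespace LogCounter

variable (T : ℕ)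

def m : ℕ := Nat.log 2 T + 1
def n : ℕ := m T + 2

def vtx (j : ℕ) : Fin (n T) := ⟨min j (m T + 1), by unfold n; omega⟩

lemma vtx_val {j : ℕ} (h : j ≤ m T + 1) : (vtx T j).val = j := by
  simp only [vtx]; omega

def A : Fin (n T) := vtx T (m T)
def B : Fin (n T) := vtx T (m T + 1)
def C : Fin (n T) := vtx T 0

lemma A_val : (A T).val = m T := vtx_val T (by omega)
lemma B_val : (B T).val = m T + 1 := vtx_val T (by omega)
lemma C_val : (C T).val = 0 := vtx_val T (by omega)

def nxt (i : ℕ) : Fin (n T) := if i + 1 < m T then vtx T (i + 1) else B T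

def es0 : Fin (n T) → Fin (n T) := fun v =>
  if v.val < m T then (if T / 2 ^ v.val % 2 = 1 then A T else nxt T v.val)
  else if v.val = m T then C T else B T

def es1 : Fin (n T) → Fin (n T) := fun v =>
  if v.val < m T then (if T / 2 ^ v.val % 2 = 1 then nxt T v.val else A T)
  else if v.val = m T then C T else B T

/-- pass p+1 reaches chain level i iff `Rch i p`. -/
def Rch (i p : ℕ) : Prop := p % 2 ^ i = T % 2 ^ i

instance (i p : ℕ) : Decidable (Rch T i p) := by unfold Rch; infer_instance

/-- number of passes among the first p that reach level i. -/
def e (i p : ℕ) : ℕ := (p + (2 ^ i - 1 - T % 2 ^ i)) / 2 ^ i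

/-- switch state of chain vertex i before pass p+1. -/
def bb (i p : ℕ) : Bool := decide (e T i p % 2 = 1)

lemma bb_zero (i : ℕ) : bb T i 0 = false := by
  have hk : 0 < 2 ^ i := Nat.pow_pos (by norm_num)
  have hr : T % 2 ^ i < 2 ^ i := Nat.mod_lt _ hk
  have : e T i 0 = 0 := by
    unfold e; exact Nat.div_eq_of_lt (by omega)
  simp [bb, this]

lemma dvd_iff_rch (i p : ℕ) : (2 ^ i ∣ p + (2 ^ i - 1 - T % 2 ^ i) + 1) ↔ Rch T i p := by
  have hk : 0 < 2 ^ i := Nat.pow_pos (by norm_num)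
  have hr : T % 2 ^ i < 2 ^ i := Nat.mod_lt _ hk
  rw [show p + (2 ^ i - 1 - T % 2 ^ i) + 1 = p + (2 ^ i - T % 2 ^ i) by omega]
  set k := 2 ^ i with hkdef
  set r := T % k with hrdef
  have h1 : r + (k - r) = k := by omega
  have hk0 : k ≡ 0 [MOD k] := (Nat.modEq_zero_iff_dvd).2 dvd_rfl
  constructor
  · intro h
    have h2 : p + (k - r) ≡ 0 [MOD k] := (Nat.modEq_zero_iff_dvd).2 h
    have h3 : p + (k - r) ≡ r + (k - r) [MOD k] := by
      rw [h1]; exact h2.trans hk0.symm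
    have h4 : p ≡ r [MOD k] := Nat.ModEq.add_right_cancel' _ h3
    unfold Rch
    unfold Nat.ModEq at h4
    rw [h4, Nat.mod_eq_of_lt hr]
  · intro h
    have h4 : p ≡ r [MOD k] := by
      unfold Rch at h
      unfold Nat.ModEq
      rw [h, Nat.mod_eq_of_lt hr]
    have h3 := h4.add_right (k - r)
    rw [h1] at h3
    exact (Nat.modEq_zero_iff_dvd).1 (h3.trans hk0)

lemma e_succ (i p : ℕ) : e T i (p + 1) = e T i p + if Rch T i p then 1 else 0 := by
  unfold e
  rw [show p + 1 + (2 ^ i - 1 - T % 2 ^ i) = (p + (2 ^ i - 1 - T % 2 ^ i)) + 1 by omega,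
    Nat.succ_div]
  congr 1
  by_cases h : Rch T i p
  · rw [if_pos ((dvd_iff_rch T i p).2 h), if_pos h]
  · rw [if_neg (fun hd => h ((dvd_iff_rch T i p).1 hd)), if_neg h]

lemma e_at_rch (i p : ℕ) (h : Rch T i p) : e T i p = p / 2 ^ i := by
  have hk : 0 < 2 ^ i := Nat.pow_pos (by norm_num)
  have hr : T % 2 ^ i < 2 ^ i := Nat.mod_lt _ hk
  have hq := Nat.div_add_mod p (2 ^ i)
  have h3 : 2 ^ i * (p / 2 ^ i) + T % 2 ^ i = p := by
    rw [← h]; exact Nat.div_add_mod p (2 ^ i)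
  unfold e
  rw [show p + (2 ^ i - 1 - T % 2 ^ i) = 2 ^ i * (p / 2 ^ i) + (2 ^ i - 1) by omega,
    Nat.mul_add_div hk]
  simp [Nat.div_eq_of_lt (show 2 ^ i - 1 < 2 ^ i by omega)]

lemma rch_zero (p : ℕ) : Rch T 0 p := by simp [Rch, Nat.mod_one]

lemma rch_of_le {i j p : ℕ} (h : j ≤ i) (hr : Rch T i p) : Rch T j p :=
  Nat.ModEq.of_dvd (pow_dvd_pow 2 h) hr

lemma mod_mul_succ (x i : ℕ) : x % 2 ^ (i + 1) = x % 2 ^ i + 2 ^ i * (x / 2 ^ i % 2) := by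
  rw [pow_succ, Nat.mod_mul]

lemma rch_succ_iff (i p : ℕ) (h : Rch T i p) :
    Rch T (i + 1) p ↔ p / 2 ^ i % 2 = T / 2 ^ i % 2 := by
  have hk : 0 < 2 ^ i := Nat.pow_pos (by norm_num)
  unfold Rch at h ⊢
  rw [mod_mul_succ, mod_mul_succ, h]
  constructor
  · intro hh
    exact Nat.eq_of_mul_eq_mul_left hk (Nat.add_left_cancel hh)
  · intro hh
    rw [hh]

lemma bb_eq_iff (i p : ℕ) (h : Rch T i p) :
    (bb T i p = decide (T / 2 ^ i % 2 = 1)) ↔ Rch T (i + 1) p := by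
  rw [bb, e_at_rch T i p h, decide_eq_decide, rch_succ_iff T i p h]
  omega

lemma bb_succ (i p : ℕ) : bb T i (p + 1) = if Rch T i p then !(bb T i p) else bb T i p := by
  unfold bb
  rw [e_succ]
  by_cases h : Rch T i p
  · rw [if_pos h, if_pos h]
    rcases Nat.mod_two_eq_zero_or_one (e T i p) with h2 | h2 <;>
      simp [Nat.add_mod, h2]
  · rw [if_neg h, if_neg h, Nat.add_zero]

lemma T_lt_pow_m : T < 2 ^ m T := Nat.lt_pow_succ_log_self (by norm_num) T

lemma not_rch_m {p : ℕ} (hp : p < T) : ¬ Rch T (m T) p := by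
  intro h
  unfold Rch at h
  have h1 : T < 2 ^ m T := T_lt_pow_m T
  rw [Nat.mod_eq_of_lt (lt_trans hp h1), Nat.mod_eq_of_lt h1] at h
  omega

/-- depth of pass p+1 (exit vertex index), for p < T. -/
noncomputable def d (p : ℕ) : ℕ := if h : ∃ i, ¬ Rch T i p then Nat.find h - 1 else 0

lemma d_spec {p : ℕ} (hp : p < T) :
    Rch T (d T p) p ∧ ¬ Rch T (d T p + 1) p ∧ d T p + 1 ≤ m T := by
  have hex : ∃ i, ¬ Rch T i p := ⟨m T, not_rch_m T hp⟩
  have hf1 : 1 ≤ Nat.find hex := by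
    rcases Nat.eq_zero_or_pos (Nat.find hex) with h | h
    · exact absurd (h ▸ Nat.find_spec hex) (not_not_intro (rch_zero T p))
    · exact h
  have heq : d T p + 1 = Nat.find hex := by
    rw [d, dif_pos hex]; omega
  refine ⟨?_, ?_, ?_⟩
  · have := Nat.find_min hex (m := d T p) (by omega)
    exact not_not.1 this
  · rw [heq]; exact Nat.find_spec hex
  · rw [heq]; exact Nat.find_le (not_rch_m T hp)

lemma rch_iff_le_d {p : ℕ} (hp : p < T) (i : ℕ) : Rch T i p ↔ i ≤ d T p := by
  obtain ⟨h1, h2, h3⟩ := d_spec T hp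
  constructor
  · intro h
    by_contra hi
    exact h2 (rch_of_le T (by omega) h)
  · intro h
    exact rch_of_le T h h1

/-- switch configuration before pass p+1. -/
def sig (p : ℕ) : Fin (n T) → Bool := fun v =>
  if v.val < m T then bb T v.val p else if v.val = m T then decide (p % 2 = 1) else false

/-- mid-pass configuration: j switches of the chain already toggled. -/
def msig (p j : ℕ) : Fin (n T) → Bool := fun v =>
  if v.val < j then !(sig T p v) else sig T p v

def mid (p j : ℕ) : Fin (n T) × (Fin (n T) → Bool) := (vtx T j, msig T p j)

lemma msig_zero (p : ℕ) : msig T p 0 = sig T p := by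
  funext v; simp [msig]

lemma sig_zero : sig T 0 = fun _ => false := by
  funext v
  unfold sig
  rcases lt_trichotomy v.val (m T) with h | h | h
  · rw [if_pos h, bb_zero]
  · rw [if_neg (by omega), if_pos h]; simp
  · rw [if_neg (by omega), if_neg (by omega)]

lemma mid_zero (p : ℕ) : mid T p 0 = (C T, sig T p) := by
  unfold mid C
  rw [msig_zero]

lemma vtx_ne {v : Fin (n T)} {j : ℕ} (hj : j ≤ m T + 1) (h : v.val ≠ j) : v ≠ vtx T j := by
  intro he
  rw [he, vtx_val T hj] at h
  exact h rfl

/-- update of msig at vtx j gives msig (j+1) -/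
lemma update_msig (p j : ℕ) (hj : j ≤ m T + 1) :
    Function.update (msig T p j) (vtx T j) (!(msig T p j (vtx T j))) = msig T p (j + 1) := by
  funext v
  by_cases hv : v = vtx T j
  · subst hv
    rw [Function.update_self]
    unfold msig
    rw [vtx_val T hj]
    rw [if_neg (by omega), if_pos (by omega)]
  · rw [Function.update_of_ne hv]
    have hne : v.val ≠ j := by
      intro h
      exact hv (Fin.ext (by rw [h, vtx_val T hj]))
    unfold msig
    by_cases h1 : v.val < j
    · rw [if_pos h1, if_pos (by omega)]
    · rw [if_neg h1, if_neg (by omega)]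

lemma msig_at_vtx (p j : ℕ) (hj : j < m T) : msig T p j (vtx T j) = bb T j p := by
  unfold msig
  rw [vtx_val T (by omega), if_neg (by omega)]
  unfold sig
  rw [vtx_val T (by omega), if_pos hj]

lemma step_mid_continue (p j : ℕ) (hj : j < m T) (hr : Rch T (j + 1) p) :
    step (es0 T) (es1 T) (mid T p j) = (nxt T j, msig T p (j + 1)) := by
  have hrj : Rch T j p := rch_of_le T (Nat.le_succ j) hr
  have hb : bb T j p = decide (T / 2 ^ j % 2 = 1) := (bb_eq_iff T j p hrj).2 hr
  unfold step mid
  simp only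
  rw [msig_at_vtx T p j hj]
  rw [show Function.update (msig T p j) (vtx T j) (!(bb T j p)) = msig T p (j + 1) by
    rw [← msig_at_vtx T p j hj]; exact update_msig T p j (by omega)]
  congr 1
  by_cases hd : bb T j p
  · rw [if_pos hd]
    have : T / 2 ^ j % 2 = 1 := of_decide_eq_true (hb ▸ hd)
    unfold es1
    rw [vtx_val T (by omega), if_pos hj, if_pos this]
  · rw [if_neg hd]
    have hd' : bb T j p = false := by simpa using hd
    have : ¬ (T / 2 ^ j % 2 = 1) := by
      intro h
      rw [hb, decide_eq_true h] at hd'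
      exact absurd hd' (by simp)
    unfold es0
    rw [vtx_val T (by omega), if_pos hj, if_neg this]

lemma step_mid_exit (p j : ℕ) (hj : j < m T) (hrj : Rch T j p) (hnr : ¬ Rch T (j + 1) p) :
    step (es0 T) (es1 T) (mid T p j) = (A T, msig T p (j + 1)) := by
  have hb : ¬ (bb T j p = decide (T / 2 ^ j % 2 = 1)) := fun h => hnr ((bb_eq_iff T j p hrj).1 h)
  unfold step mid
  simp only
  rw [msig_at_vtx T p j hj]
  rw [show Function.update (msig T p j) (vtx T j) (!(bb T j p)) = msig T p (j + 1) by
    rw [← msig_at_vtx T p j hj]; exact update_msig T p j (by omega)]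
  congr 1
  by_cases hd : bb T j p
  · rw [if_pos hd]
    have : ¬ (T / 2 ^ j % 2 = 1) := by
      intro h
      exact hb (by rw [hd, decide_eq_true h])
    unfold es1
    rw [vtx_val T (by omega), if_pos hj, if_neg this]
  · rw [if_neg hd]
    have hd' : bb T j p = false := by simpa using hd
    have : T / 2 ^ j % 2 = 1 := by
      by_contra h
      exact hb (by rw [hd', decide_eq_false h])
    unfold es0
    rw [vtx_val T (by omega), if_pos hj, if_pos this]

lemma step_at_A (τ : Fin (n T) → Bool) :
    step (es0 T) (es1 T) (A T, τ) = (C T, Function.update τ (A T) (!(τ (A T)))) := by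
  unfold step
  simp only
  congr 1
  have hA : (A T).val = m T := A_val T
  by_cases h : τ (A T)
  · rw [if_pos h]
    unfold es1
    rw [hA, if_neg (by omega), if_pos rfl]
  · rw [if_neg (by simp [h])]
    unfold es0
    rw [hA, if_neg (by omega), if_pos rfl]

def cfg (p : ℕ) : Fin (n T) × (Fin (n T) → Bool) := (C T, sig T p)

lemma iter_to_mid (p : ℕ) : ∀ j, j < m T → Rch T j p →
    (step (es0 T) (es1 T))^[j] (cfg T p) = mid T p j := by
  intro j
  induction j with
  | zero => intro _ _; rw [Function.iterate_zero_apply, cfg, mid_zero]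
  | succ j ih =>
    intro hj hr
    have hj' : j < m T := by omega
    rw [Function.iterate_succ_apply',
      ih (by omega) (rch_of_le T (Nat.le_succ j) hr),
      step_mid_continue T p j hj' hr]
    unfold mid nxt
    rw [if_pos hj]

lemma pass_A (p : ℕ) (hp : p < T) :
    (step (es0 T) (es1 T))^[d T p + 1] (cfg T p) = (A T, msig T p (d T p + 1)) := by
  obtain ⟨h1, h2, h3⟩ := d_spec T hp
  rw [Function.iterate_succ_apply', iter_to_mid T p (d T p) (by omega) h1,
    step_mid_exit T p (d T p) (by omega) h1 h2]

lemma pass_cfg (p : ℕ) (hp : p < T) :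
    (step (es0 T) (es1 T))^[d T p + 2] (cfg T p) = cfg T (p + 1) := by
  obtain ⟨h1, h2, h3⟩ := d_spec T hp
  rw [show d T p + 2 = (d T p + 1) + 1 by omega, Function.iterate_succ_apply',
    pass_A T p hp, step_at_A]
  unfold cfg
  congr 1
  funext v
  by_cases hv : v = A T
  · subst hv
    rw [Function.update_self]
    have hA : (A T).val = m T := A_val T
    have h4 : msig T p (d T p + 1) (A T) = decide (p % 2 = 1) := by
      unfold msig
      rw [hA, if_neg (by omega)]
      unfold sig
      rw [hA, if_neg (by omega), if_pos rfl]
    rw [h4]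
    unfold sig
    rw [hA, if_neg (by omega), if_pos rfl]
    rcases Nat.mod_two_eq_zero_or_one p with h | h <;> simp [Nat.add_mod, h]
  · rw [Function.update_of_ne hv]
    have hvm : v.val ≠ m T := by
      intro h
      exact hv (Fin.ext (by rw [h, A_val]))
    unfold msig sig
    by_cases hc : v.val < m T
    · rw [if_pos hc, if_pos hc, bb_succ]
      by_cases hle : v.val < d T p + 1
      · rw [if_pos hle, if_pos ((rch_iff_le_d T hp v.val).2 (by omega))]
      · rw [if_neg hle, if_neg (show ¬ Rch T (v.val) p from fun h => hle (by
          have := (rch_iff_le_d T hp v.val).1 h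
          omega))]
    · rw [if_neg hc, if_neg hc, if_neg hvm, if_neg hvm,
        if_neg (show ¬ (v.val < d T p + 1) by omega)]

noncomputable def Ns : ℕ → ℕ
  | 0 => 0
  | (p + 1) => Ns p + (d T p + 2)

lemma run_Ns_add (p j : ℕ) (hp : p ≤ T) :
    run (es0 T) (es1 T) (C T) (Ns T p + j) = (step (es0 T) (es1 T))^[j] (cfg T p) := by
  induction p generalizing j with
  | zero =>
    have : cfg T 0 = (C T, fun _ => false) := by rw [cfg, sig_zero]
    rw [this]
    unfold run Ns
    rw [Nat.zero_add]
  | succ p ih =>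
    have hp' : p < T := by omega
    show run (es0 T) (es1 T) (C T) (Ns T p + (d T p + 2) + j) = _
    rw [show Ns T p + (d T p + 2) + j = Ns T p + (j + (d T p + 2)) by omega,
      ih _ (by omega), Function.iterate_add_apply, pass_cfg T p hp']

lemma rch_self (i : ℕ) : Rch T i T := rfl

lemma final_B :
    (step (es0 T) (es1 T))^[m T] (cfg T T) = (B T, msig T T (m T)) := by
  have hm : 1 ≤ m T := by unfold m; omega
  rw [show m T = (m T - 1) + 1 by omega, Function.iterate_succ_apply',
    iter_to_mid T T (m T - 1) (by omega) (rch_self T _),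
    step_mid_continue T T (m T - 1) (by omega) (rch_self T _)]
  unfold nxt
  rw [if_neg (by omega), show m T - 1 + 1 = m T by omega]

lemma vtx_ne_A {j : ℕ} (hj : j < m T) : vtx T j ≠ A T := by
  intro h
  have := congrArg Fin.val h
  rw [vtx_val T (by omega), A_val] at this
  omega

lemma vtx_ne_B {j : ℕ} (hj : j ≤ m T) : vtx T j ≠ B T := by
  intro h
  have := congrArg Fin.val h
  rw [vtx_val T (by omega), B_val] at this
  omega

lemma A_ne_B : A T ≠ B T := vtx_ne_B T (le_refl _)

lemma pos_in_pass {p : ℕ} (hp : p < T) {j : ℕ} (hj : j < d T p + 2) :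
    (run (es0 T) (es1 T) (C T) (Ns T p + j)).1
      = if j = d T p + 1 then A T else vtx T j := by
  obtain ⟨h1, h2, h3⟩ := d_spec T hp
  rw [run_Ns_add T p j (by omega)]
  by_cases h : j = d T p + 1
  · rw [if_pos h, h, pass_A T p hp]
  · rw [if_neg h]
    have hjd : j ≤ d T p := by omega
    rw [iter_to_mid T p j (by omega) ((rch_iff_le_d T hp j).2 hjd)]
    rfl

lemma pos_final {j : ℕ} (hj : j < m T) :
    (run (es0 T) (es1 T) (C T) (Ns T T + j)).1 = vtx T j := by
  rw [run_Ns_add T T j (le_refl _), iter_to_mid T T j hj (rch_self T _)]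
  rfl

lemma count_main : ∀ p, p ≤ T →
    (∀ k < Ns T p, (run (es0 T) (es1 T) (C T) k).1 ≠ B T) ∧
    ((Finset.range (Ns T p)).filter
      (fun k => (run (es0 T) (es1 T) (C T) k).1 = A T)).card = p := by
  intro p
  induction p with
  | zero =>
    intro _
    refine ⟨fun k hk => absurd hk (by simp [Ns]), by simp [Ns]⟩
  | succ p ih =>
    intro hp
    have hp' : p < T := by omega
    obtain ⟨ihB, ihc⟩ := ih (by omega)
    have hNs : Ns T (p + 1) = Ns T p + (d T p + 2) := rfl
    have hwin : ∀ j < d T p + 2,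
        (run (es0 T) (es1 T) (C T) (Ns T p + j)).1
          = if j = d T p + 1 then A T else vtx T j := fun j hj => pos_in_pass T hp' hj
    obtain ⟨hd1, hd2, hd3⟩ := d_spec T hp'
    constructor
    · intro k hk
      by_cases h : k < Ns T p
      · exact ihB k h
      · have hk' : k = Ns T p + (k - Ns T p) := by omega
        have hj : k - Ns T p < d T p + 2 := by omega
        rw [hk', hwin _ hj]
        by_cases h2 : k - Ns T p = d T p + 1
        · rw [if_pos h2]; exact A_ne_B T
        · rw [if_neg h2]; exact vtx_ne_B T (by omega)
    · rw [hNs]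
      have hsplit : Finset.range (Ns T p + (d T p + 2))
          = Finset.range (Ns T p) ∪ Finset.Ico (Ns T p) (Ns T p + (d T p + 2)) := by
        rw [Finset.range_eq_Ico, Finset.range_eq_Ico]
        exact (Finset.Ico_union_Ico_eq_Ico (Nat.zero_le _) (Nat.le_add_right _ _)).symm
      rw [hsplit, Finset.filter_union, Finset.card_union_of_disjoint (by
        refine Finset.disjoint_left.2 fun k hk1 hk2 => ?_
        rw [Finset.mem_filter, Finset.mem_range] at hk1
        rw [Finset.mem_filter, Finset.mem_Ico] at hk2
        omega)]
      rw [ihc]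
      have hone : (Finset.Ico (Ns T p) (Ns T p + (d T p + 2))).filter
          (fun k => (run (es0 T) (es1 T) (C T) k).1 = A T) = {Ns T p + (d T p + 1)} := by
        ext k
        rw [Finset.mem_filter, Finset.mem_Ico, Finset.mem_singleton]
        constructor
        · rintro ⟨⟨hk1, hk2⟩, hkA⟩
          have hk' : k = Ns T p + (k - Ns T p) := by omega
          have hj : k - Ns T p < d T p + 2 := by omega
          rw [hk', hwin _ hj] at hkA
          by_cases h2 : k - Ns T p = d T p + 1
          · omega
          · rw [if_neg h2] at hkA
            exact absurd hkA (vtx_ne_A T (by omega))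
        · intro h
          subst h
          refine ⟨⟨by omega, by omega⟩, ?_⟩
          rw [hwin _ (by omega), if_pos rfl]
      rw [hone, Finset.card_singleton]

lemma visits : VisitsExactly (es0 T) (es1 T) (C T) (A T) (B T) T := by
  obtain ⟨hB, hc⟩ := count_main T T (le_refl _)
  refine ⟨Ns T T + m T, ?_, ?_, ?_⟩
  · rw [run_Ns_add T T (m T) (le_refl _), final_B]
  · intro k hk
    by_cases h : k < Ns T T
    · exact hB k h
    · have hk' : k = Ns T T + (k - Ns T T) := by omega
      rw [hk', pos_final T (by omega)]
      exact vtx_ne_B T (by omega)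
  · have hsplit : Finset.range (Ns T T + m T)
        = Finset.range (Ns T T) ∪ Finset.Ico (Ns T T) (Ns T T + m T) := by
      rw [Finset.range_eq_Ico, Finset.range_eq_Ico]
      exact (Finset.Ico_union_Ico_eq_Ico (Nat.zero_le _) (Nat.le_add_right _ _)).symm
    rw [hsplit, Finset.filter_union, Finset.card_union_of_disjoint (by
      refine Finset.disjoint_left.2 fun k hk1 hk2 => ?_
      rw [Finset.mem_filter, Finset.mem_range] at hk1
      rw [Finset.mem_filter, Finset.mem_Ico] at hk2
      omega)]
    rw [hc]
    have hzero : (Finset.Ico (Ns T T) (Ns T T + m T)).filter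
        (fun k => (run (es0 T) (es1 T) (C T) k).1 = A T) = ∅ := by
      ext k
      rw [Finset.mem_filter, Finset.mem_Ico]
      simp only [Finset.notMem_empty, iff_false]
      rintro ⟨⟨hk1, hk2⟩, hkA⟩
      have hk' : k = Ns T T + (k - Ns T T) := by omega
      rw [hk', pos_final T (by omega)] at hkA
      exact vtx_ne_A T (by omega) hkA
    rw [hzero, Finset.card_empty]
    omega

end LogCounter

/-- Logarithmic-size counters: for every `T ≥ 1` there is a switch graph on at most
`⌊log₂ T⌋ + 3` vertices with distinct vertices `C`, `A`, `B` where both out-edges of `A`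
go to `C` and `B` is absorbing, such that the train run from `C` visits `A` exactly `T`
times before first reaching `B`. -/
theorem log_size_counter (T : ℕ) (hT : 1 ≤ T) :
    ∃ n : ℕ, n ≤ Nat.log 2 T + 3 ∧
      ∃ (s0 s1 : Fin n → Fin n) (C A B : Fin n),
        C ≠ A ∧ C ≠ B ∧ A ≠ B ∧
        s0 A = C ∧ s1 A = C ∧ s0 B = B ∧ s1 B = B ∧
        VisitsExactly s0 s1 C A B T := by
  refine ⟨LogCounter.n T, by unfold LogCounter.n LogCounter.m; omega,
    LogCounter.es0 T, LogCounter.es1 T, LogCounter.C T, LogCounter.A T, LogCounter.B T,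
    ?_, ?_, ?_, ?_, ?_, ?_, ?_, LogCounter.visits T⟩
  · intro h
    have := congrArg Fin.val h
    rw [LogCounter.C_val, LogCounter.A_val] at this
    unfold LogCounter.m at this
    omega
  · intro h
    have := congrArg Fin.val h
    rw [LogCounter.C_val, LogCounter.B_val] at this
    omega
  · exact LogCounter.A_ne_B T
  · show (if (LogCounter.A T).val < LogCounter.m T then _ else _) = _
    rw [LogCounter.A_val, if_neg (lt_irrefl _), if_pos rfl]
  · show (if (LogCounter.A T).val < LogCounter.m T then _ else _) = _
    rw [LogCounter.A_val, if_neg (lt_irrefl _), if_pos rfl]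
  · show (if (LogCounter.B T).val < LogCounter.m T then _ else _) = _
    rw [LogCounter.B_val, if_neg (by omega), if_neg (by omega)]
  · show (if (LogCounter.B T).val < LogCounter.m T then _ else _) = _
    rw [LogCounter.B_val, if_neg (by omega), if_neg (by omega)]
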